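/- arXiv:1306.3492 — 2 statements merged into one kernel-verified Lean document; each statement's English description precedes it below -/
import Mathlib

section
/- Let n ≥ 3, Q = {1,...,n}, a the n-cycle i ↦ i+1 (a(n)=1), b with b(1)=2 and b(i)=1 for i≥2, and let G = {a^1, ..., a^n} be the cyclic group generated by a. For 1 ≤ j < i ≤ n, the orbits {a^i ∘ b² ∘ a^{n-i} ∘ a^t : 1 ≤ t ≤ n} and {a^j ∘ b² ∘ a^{n-j} ∘ a^t : 1 ≤ t ≤ n} are disjoint. -/
/-!
With `a = (· + 1)` on `Fin n`, the map `b ∘ b` sends `0` to `0` and everything else to `1`, so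
every element of the orbit of `a^i ∘ b² ∘ a^{n-i}` is a translate of the map that takes the
value `s` at the single point `-i` and `s + 1` everywhere else. Two such maps with distinct
exceptional points `-i ≠ -j` cannot agree: comparing them at both points forces `2 = 0`,
which fails for `n ≥ 3`.
-/

open Fin.CommRing

theorem CharP.natCast_ne_natCast_of_lt {R : Type*} [AddMonoidWithOne R] [IsRightCancelAdd R]
    (p : ℕ) [CharP R p] {i j : ℕ} (hji : j < i) (hij : i < j + p) : (i : R) ≠ j := by
  rw [Ne, CharP.natCast_eq_natCast R p, Nat.ModEq.comm, Nat.modEq_iff_dvd' hji.le]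
  intro hdvd
  have := Nat.le_of_dvd (Nat.sub_pos_of_lt hji) hdvd
  omega

theorem eq_of_ite_eq_ite {α M : Type*} [DecidableEq α] [AddLeftCancelMonoid M] {e : M}
    (he : e + e ≠ 0) {p q : α} {c d : M}
    (h : (fun x => if x = p then c else c + e) = fun x => if x = q then d else d + e) :
    p = q := by
  by_contra hpq
  have hp : c = d + e := by simpa [hpq] using congrFun h p
  have hq : c + e = d := by simpa [Ne.symm hpq] using congrFun h q
  rw [hp, add_assoc, add_eq_left] at hq
  exact he hq

theorem iterate_eq_add_natCast {M : Type*} [AddMonoidWithOne M] {a : M → M}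
    (ha : ∀ x, a x = x + 1) (k : ℕ) : a^[k] = (· + (k : M)) := by
  rw [funext ha, add_right_iterate, nsmul_one]

theorem comp_self_eq_ite {M : Type*} [Zero M] [One M] [DecidableEq M] {b : M → M}
    (h10 : (1 : M) ≠ 0) (hb0 : b 0 = 1) (hb : ∀ x, x ≠ 0 → b x = 0) :
    b ∘ b = fun x => if x = 0 then 0 else 1 := by
  funext x
  by_cases hx : x = 0
  · simp [hx, hb0, hb 1 h10]
  · simp [hx, hb x hx, hb0]

theorem iterate_comp_conj_eq_ite {M : Type*} [AddCommGroupWithOne M] [DecidableEq M]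
    {a f : M → M} (ha : ∀ x, a x = x + 1) (hf : f = fun x => if x = 0 then 0 else 1)
    (t l k : ℕ) :
    a^[t] ∘ (a^[l] ∘ f ∘ a^[k]) = fun x => if x = -(k : M) then (l + t : M) else (l + t : M) + 1 := by
  funext x
  simp only [Function.comp_apply, iterate_eq_add_natCast ha, hf, ← eq_neg_iff_add_eq_zero]
  split_ifs <;> abel

/-- On Q = Fin n (n ≥ 3, states relabelled 1,…,n ↦ 0,…,n-1), with a the n-cycle and b
the given rank-two map, for 1 ≤ j < i ≤ n the orbits (under right multiplication by
powers of a; composition applies the leftmost function first) of a^i ∘ b² ∘ a^{n-i}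
and a^j ∘ b² ∘ a^{n-j} are disjoint. -/
theorem stmt_14 (n : ℕ) [NeZero n] (hn : 3 ≤ n) (a b : Fin n → Fin n)
    (ha : ∀ i : Fin n, a i = i + 1)
    (hb0 : b 0 = 1) (hb : ∀ i : Fin n, i ≠ 0 → b i = 0)
    (i j : ℕ) (hj : 1 ≤ j) (hji : j < i) (hi : i ≤ n) :
    Disjoint
      {g : Fin n → Fin n | ∃ t : ℕ, 1 ≤ t ∧ t ≤ n ∧
        g = a^[t] ∘ (a^[n - i] ∘ (b ∘ b) ∘ a^[i])}
      {g : Fin n → Fin n | ∃ t : ℕ, 1 ≤ t ∧ t ≤ n ∧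
        g = a^[t] ∘ (a^[n - j] ∘ (b ∘ b) ∘ a^[j])} := by
  have h10 : (1 : Fin n) ≠ 0 := by
    simpa using CharP.natCast_ne_natCast_of_lt (R := Fin n) n zero_lt_one (by omega)
  have h20 : (1 + 1 : Fin n) ≠ 0 := by
    simpa [one_add_one_eq_two] using
      CharP.natCast_ne_natCast_of_lt (R := Fin n) n zero_lt_two (by omega)
  have hij : (i : Fin n) ≠ j := CharP.natCast_ne_natCast_of_lt n hji (by omega)
  have hbb := comp_self_eq_ite h10 hb0 hb
  rw [Set.disjoint_left]
  rintro g ⟨t, -, -, rfl⟩ ⟨s, -, -, heq⟩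
  rw [iterate_comp_conj_eq_ite ha hbb, iterate_comp_conj_eq_ite ha hbb] at heq
  exact hij (neg_inj.mp (eq_of_ite_eq_ite h20 heq))
end

section
/- Let n ≥ 3, Q = {1,...,n}, a the n-cycle i ↦ i+1 (a(n)=1), b with b(1)=2, b(i)=1 for i≥2. The transformation monoid M generated by a and b has exactly 2n(n+1) elements. -/
/-!
Every element of the monoid is either a rotation `x ↦ x + c` or a map sending one point `s` to
`u` and all other points to `v`, with `u - v ∈ {-1, 0, 1}`. These maps form a submonoid containing
`a` and `b`, and each of them is obtained from `b * a * b` (the constant `0`), `b` or `b * b` by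
composing with rotations on both sides. For `n ≥ 3` a map of the second kind determines `v`, and
also `s` and `u` unless it is constant; this leaves `n` rotations, `n` constants and `2n²` maps
with `u = v ± 1`.
-/

open Function

namespace RotationStep

section UpdateConst

variable {α : Type*} [DecidableEq α]

def updateConst (v s u : α) : Function.End α := update (const α v) s u

@[simp]
lemma updateConst_apply (v s u x : α) : updateConst v s u x = if x = s then u else v :=
  update_apply _ _ _ _

lemma updateConst_self (v s : α) : updateConst v s v = const α v := update_eq_self s _

lemma mul_updateConst (f : Function.End α) (v s u : α) :
    f * updateConst v s u = updateConst (f v) s (f u) := by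
  funext x
  show f (updateConst v s u x) = updateConst (f v) s (f u) x
  simp only [updateConst_apply, apply_ite f]

variable [Fintype α]

lemma exists_ne_and_ne (hα : 2 < Fintype.card α) (s s' : α) : ∃ x, x ≠ s ∧ x ≠ s' := by
  obtain ⟨x, -, hx⟩ := Finset.exists_mem_notMem_of_card_lt_card
    (s := {s, s'}) (t := Finset.univ) (Finset.card_le_two.trans_lt hα)
  simp only [Finset.mem_insert, Finset.mem_singleton, not_or] at hx
  exact ⟨x, hx⟩

lemma updateConst_eq_updateConst_iff (hα : 2 < Fintype.card α) {v s u v' s' u' : α} :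
    updateConst v s u = updateConst v' s' u' ↔
      v = v' ∧ (s = s' ∧ u = u' ∨ u = v ∧ u' = v') := by
  constructor
  · intro h
    obtain ⟨x, hxs, hxs'⟩ := exists_ne_and_ne hα s s'
    obtain rfl : v = v' := by simpa [hxs, hxs'] using congrFun h x
    refine ⟨rfl, ?_⟩
    by_cases hs : s = s'
    · subst hs
      exact Or.inl ⟨rfl, by simpa using congrFun h s⟩
    · have hu := congrFun h s
      have hu' := congrFun h s'
      simp only [updateConst_apply, if_pos, hs, Ne.symm hs, if_false] at hu hu'
      exact Or.inr ⟨hu, hu'.symm⟩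
  · rintro ⟨rfl, ⟨rfl, rfl⟩ | ⟨rfl, rfl⟩⟩
    · rfl
    · rw [updateConst_self, updateConst_self]

lemma not_injective_updateConst (hα : 2 < Fintype.card α) (v s u : α) :
    ¬ Injective (updateConst v s u) := by
  intro hinj
  obtain ⟨x, hxs, -⟩ := exists_ne_and_ne hα s s
  obtain ⟨y, hys, hyx⟩ := exists_ne_and_ne hα s x
  exact hyx (hinj (by simp [hxs, hys]))

end UpdateConst

section Cyclic

variable {n : ℕ}

def rotation (c : Fin n) : Function.End (Fin n) := (· + c)

@[simp]
lemma rotation_apply (c x : Fin n) : rotation c x = x + c := rfl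

lemma rotation_mul_rotation (c d : Fin n) : rotation c * rotation d = rotation (d + c) :=
  funext fun x => add_assoc x d c

lemma rotation_ne_updateConst (hn : 3 ≤ n) (c v s u : Fin n) : rotation c ≠ updateConst v s u :=
  fun h => not_injective_updateConst (by rwa [Fintype.card_fin]) v s u (h ▸ add_left_injective c)

variable [NeZero n]

lemma rotation_one_pow (c : Fin n) : rotation 1 ^ c.val = rotation c := by
  show (· + 1)^[c.val] = rotation c
  rw [add_right_iterate]
  open Fin.CommRing in simp only [nsmul_eq_mul, Fin.cast_val_eq_self, mul_one]
  rfl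

lemma updateConst_mul_rotation (v s u d : Fin n) :
    updateConst v s u * rotation d = updateConst v (s - d) u := by
  funext x
  show updateConst v s u (x + d) = _
  simp [eq_sub_iff_add_eq]

lemma updateConst_eq_rotation_mul (v s u c : Fin n) :
    updateConst v s u = rotation c * updateConst (v - c) 0 (u - c) * rotation (-s) := by
  rw [mul_updateConst, updateConst_mul_rotation]
  simp

lemma updateConst_apply_sub_apply_mem {v s u : Fin n} (h : u - v ∈ ({-1, 0, 1} : Set (Fin n)))
    (x y : Fin n) : updateConst v s u x - updateConst v s u y ∈ ({-1, 0, 1} : Set (Fin n)) := by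
  have hneg : v - u ∈ ({-1, 0, 1} : Set (Fin n)) := by
    rw [← neg_sub]
    simp only [Set.mem_insert_iff, Set.mem_singleton_iff] at h ⊢
    rcases h with h | h | h <;> simp [h]
  simp only [updateConst_apply]
  split_ifs <;> simp [h, hneg]

lemma one_ne_zero_of_three_le (hn : 3 ≤ n) : (1 : Fin n) ≠ 0 := by
  rw [Ne, Fin.one_eq_zero_iff]; omega

lemma one_add_one_ne_zero_of_three_le (hn : 3 ≤ n) : (1 : Fin n) + 1 ≠ 0 := by
  simp only [ne_eq, Fin.ext_iff, Fin.val_add, Fin.val_one', Fin.val_zero]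
  rw [Nat.mod_eq_of_lt (by omega : 1 < n), Nat.mod_eq_of_lt (by omega : 1 + 1 < n)]
  omega

lemma add_one_ne_self (hn : 3 ≤ n) (v : Fin n) : v + 1 ≠ v :=
  fun h => one_ne_zero_of_three_le hn (add_eq_left.1 h)

lemma sub_one_ne_self (hn : 3 ≤ n) (v : Fin n) : v - 1 ≠ v :=
  fun h => one_ne_zero_of_three_le hn (sub_eq_self.1 h)

lemma add_one_ne_sub_one (hn : 3 ≤ n) (v : Fin n) : v + 1 ≠ v - 1 :=
  fun h => one_add_one_ne_zero_of_three_le hn (by grind)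

def rotationStepMonoid (n : ℕ) [NeZero n] : Submonoid (Function.End (Fin n)) where
  carrier := {f | (∃ c, f = rotation c) ∨
    ∃ v s u, u - v ∈ ({-1, 0, 1} : Set (Fin n)) ∧ f = updateConst v s u}
  one_mem' := Or.inl ⟨0, funext fun x => (add_zero x).symm⟩
  mul_mem' := by
    rintro _ _ (⟨c, rfl⟩ | ⟨v, s, u, huv, rfl⟩) (⟨d, rfl⟩ | ⟨v', s', u', huv', rfl⟩)
    · exact Or.inl ⟨d + c, rotation_mul_rotation c d⟩
    · exact Or.inr ⟨v' + c, s', u' + c, by rwa [add_sub_add_right_eq_sub],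
        mul_updateConst _ _ _ _⟩
    · exact Or.inr ⟨v, s - d, u, huv, updateConst_mul_rotation v s u d⟩
    · exact Or.inr ⟨_, s', _, updateConst_apply_sub_apply_mem huv _ _, mul_updateConst _ _ _ _⟩

lemma rotationStepMonoid_le {P : Submonoid (Function.End (Fin n))}
    (hrot : ∀ c, rotation c ∈ P) (h00 : updateConst 0 0 0 ∈ P) (h01 : updateConst 0 0 1 ∈ P)
    (h10 : updateConst 1 0 0 ∈ P) : rotationStepMonoid n ≤ P := by
  rintro _ (⟨c, rfl⟩ | ⟨v, s, u, huv, rfl⟩)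
  · exact hrot c
  · have hconj : ∀ c, updateConst (v - c) 0 (u - c) ∈ P → updateConst v s u ∈ P := by
      intro c hc
      rw [updateConst_eq_rotation_mul v s u c]
      exact mul_mem (mul_mem (hrot c) hc) (hrot (-s))
    simp only [Set.mem_insert_iff, Set.mem_singleton_iff] at huv
    rcases huv with huv | huv | huv
    · exact hconj u (by rwa [sub_self, ← neg_sub, huv, neg_neg])
    · exact hconj v (by rwa [sub_self, huv])
    · exact hconj v (by rwa [sub_self, huv])

theorem closure_eq_rotationStepMonoid (hn : 3 ≤ n) {a b : Function.End (Fin n)}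
    (ha : ∀ i, a i = i + 1) (hb0 : b 0 = 1) (hb : ∀ i, i ≠ 0 → b i = 0) :
    Submonoid.closure {a, b} = rotationStepMonoid n := by
  obtain rfl : a = rotation 1 := funext ha
  obtain rfl : b = updateConst 0 0 1 := funext fun x => by
    by_cases hx : x = 0 <;> simp [hx, hb0, hb]
  have hone : (1 : Fin n) ≠ 0 := one_ne_zero_of_three_le hn
  have htwo : (1 : Fin n) + 1 ≠ 0 := one_add_one_ne_zero_of_three_le hn
  have ha_mem : rotation 1 ∈ Submonoid.closure {rotation (1 : Fin n), updateConst 0 0 1} :=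
    Submonoid.subset_closure (Set.mem_insert _ _)
  have hb_mem : updateConst 0 0 1 ∈ Submonoid.closure {rotation 1, updateConst (0 : Fin n) 0 1} :=
    Submonoid.subset_closure (Set.mem_insert_of_mem _ rfl)
  refine le_antisymm (Submonoid.closure_le.2 ?_) (rotationStepMonoid_le ?_ ?_ ?_ ?_)
  · rintro _ (rfl | rfl)
    · exact Or.inl ⟨1, rfl⟩
    · exact Or.inr ⟨0, 0, 1, by simp, rfl⟩
  · intro c
    exact rotation_one_pow c ▸ pow_mem ha_mem c.val
  · have hbab :
        updateConst 0 0 1 * (rotation 1 * updateConst 0 0 1) = updateConst (0 : Fin n) 0 0 := by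
      simp only [mul_updateConst, rotation_apply, updateConst_apply, zero_add, hone, htwo,
        if_false]
    rw [← hbab]
    exact mul_mem hb_mem (mul_mem ha_mem hb_mem)
  · exact hb_mem
  · have hbb : updateConst 0 0 1 * updateConst 0 0 1 = updateConst (1 : Fin n) 0 0 := by
      simp only [mul_updateConst, updateConst_apply, hone, if_true, if_false]
    rw [← hbb]
    exact mul_mem hb_mem hb_mem

lemma rotation_injective : Injective (rotation : Fin n → Function.End (Fin n)) :=
  fun c c' h => by simpa using congrFun h 0

def rotationStepParam (n : ℕ) [NeZero n] :
    Fin n ⊕ Fin n ⊕ (Fin n × Fin n) ⊕ (Fin n × Fin n) → Function.End (Fin n)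
  | .inl c => rotation c
  | .inr (.inl v) => updateConst v 0 v
  | .inr (.inr (.inl (v, s))) => updateConst v s (v + 1)
  | .inr (.inr (.inr (v, s))) => updateConst v s (v - 1)

lemma range_rotationStepParam :
    Set.range (rotationStepParam n) = (rotationStepMonoid n : Set (Function.End (Fin n))) := by
  ext f
  constructor
  · rintro ⟨c | v | ⟨v, s⟩ | ⟨v, s⟩, rfl⟩
    · exact Or.inl ⟨c, rfl⟩
    · exact Or.inr ⟨v, 0, v, by simp, rfl⟩
    · exact Or.inr ⟨v, s, v + 1, by simp, rfl⟩
    · exact Or.inr ⟨v, s, v - 1, by simp, rfl⟩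
  · rintro (⟨c, rfl⟩ | ⟨v, s, u, huv, rfl⟩)
    · exact ⟨.inl c, rfl⟩
    · simp only [Set.mem_insert_iff, Set.mem_singleton_iff] at huv
      rcases huv with huv | huv | huv
      · rw [sub_eq_iff_eq_add', ← sub_eq_add_neg] at huv
        exact ⟨.inr (.inr (.inr (v, s))), huv ▸ rfl⟩
      · rw [sub_eq_zero] at huv
        exact ⟨.inr (.inl v), huv ▸ (updateConst_self v 0).trans (updateConst_self v s).symm⟩
      · rw [sub_eq_iff_eq_add'] at huv
        exact ⟨.inr (.inr (.inl (v, s))), huv ▸ rfl⟩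

lemma rotationStepParam_injective (hn : 3 ≤ n) : Injective (rotationStepParam n) := by
  have hcard : 2 < Fintype.card (Fin n) := by rwa [Fintype.card_fin]
  rintro (c | v | ⟨v, s⟩ | ⟨v, s⟩) (c' | v' | ⟨v', s'⟩ | ⟨v', s'⟩) h <;>
    simp only [rotationStepParam, rotation_injective.eq_iff, rotation_ne_updateConst hn,
      (rotation_ne_updateConst hn _ _ _ _).symm, updateConst_eq_updateConst_iff hcard] at h
  all_goals
    try obtain ⟨rfl, h⟩ := h
    simp_all [add_one_ne_self hn, sub_one_ne_self hn, add_one_ne_sub_one hn,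
      (add_one_ne_self hn _).symm, (sub_one_ne_self hn _).symm, (add_one_ne_sub_one hn _).symm]

theorem card_rotationStepMonoid (hn : 3 ≤ n) :
    Nat.card (rotationStepMonoid n) = 2 * n * (n + 1) := by
  rw [← SetLike.coe_sort_coe, ← range_rotationStepParam,
    Nat.card_range_of_injective (rotationStepParam_injective hn)]
  simp only [Nat.card_eq_fintype_card, Fintype.card_sum, Fintype.card_prod, Fintype.card_fin]
  ring

end Cyclic

end RotationStep

open RotationStep in
/-- On Q = Fin n (n ≥ 3, states relabelled 1,…,n ↦ 0,…,n-1), with a the n-cycle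
i ↦ i+1 and b mapping 0 ↦ 1 and everything else to 0, the transformation monoid
generated by a and b has exactly 2n(n+1) elements. -/
theorem stmt_15 (n : ℕ) [NeZero n] (hn : 3 ≤ n) (a b : Function.End (Fin n))
    (ha : ∀ i : Fin n, a i = i + 1)
    (hb0 : b 0 = 1) (hb : ∀ i : Fin n, i ≠ 0 → b i = 0) :
    Nat.card (Submonoid.closure ({a, b} : Set (Function.End (Fin n)))) =
      2 * n * (n + 1) := by
  rw [closure_eq_rotationStepMonoid hn ha hb0 hb, card_rotationStepMonoid hn]
end
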